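/- Let α ∈ (0,2), β ∈ ℝ with α + β < 2, A ≥ 1, C₁ > 0 and δ > 0. Then there exists C > 0, depending only on α, β, A, C₁, δ, such that for every Borel measure μ on ℝ concentrated on (0,A] satisfying μ([r,∞)) ≤ C₁ r^{−α} for all r > 0, and every v with |v| ≥ δ, the function z ↦ F(v+z) + F(v−z) − 2F(v) is μ-integrable and |∫₀^∞ (F(v+z)+F(v−z)−2F(v)) dμ(z)| ≤ C|v|^{−β}. -/

import Mathlib

open Filter Set MeasureTheory

/-- Response function `F(v) = (1/(2-β))|v|^(2-β) sgn v`. -/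
noncomputable def Fresp (β v : ℝ) : ℝ := (1 / (2 - β)) * |v| ^ (2 - β) * Real.sign v

lemma Fresp_neg (β v : ℝ) : Fresp β (-v) = - Fresp β v := by
  simp only [Fresp, abs_neg, Real.sign_neg]
  ring

lemma abs_sign_le (v : ℝ) : |Real.sign v| ≤ 1 := by
  rcases Real.sign_apply_eq v with h | h | h <;> simp [h]

lemma Fresp_abs_le (β v : ℝ) (hβ : β < 2) : |Fresp β v| ≤ (1/(2-β)) * |v| ^ (2 - β) := by
  have h1 : (0:ℝ) < 2 - β := by linarith
  have := abs_sign_le v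
  calc |Fresp β v| = (1/(2-β)) * |v| ^ (2-β) * |Real.sign v| := by
        rw [Fresp, abs_mul, abs_mul]
        congr 1
        rw [abs_of_nonneg (by positivity), abs_of_nonneg (Real.rpow_nonneg (abs_nonneg _) _)]
    _ ≤ (1/(2-β)) * |v| ^ (2-β) * 1 := by
        apply mul_le_mul_of_nonneg_left this (by positivity)
    _ = _ := by ring

lemma measurable_Fresp (β : ℝ) (hβ : β < 2) : Measurable (Fresp β) := by
  have h1 : Measurable fun v : ℝ => |v| ^ (2 - β) :=
    ((Real.continuous_rpow_const (by linarith)).comp continuous_abs).measurable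
  have h2 : Measurable (Real.sign) := by
    unfold Real.sign
    exact Measurable.ite (measurableSet_lt measurable_id measurable_const) measurable_const
      (Measurable.ite (measurableSet_lt measurable_const measurable_id) measurable_const
        measurable_const)
  exact (measurable_const.mul h1).mul h2

lemma hasDerivAt_Fresp {β x : ℝ} (hβ : β < 2) (hx : 0 < x) :
    HasDerivAt (Fresp β) (x ^ (1 - β)) x := by
  have h2 : (2:ℝ) - β ≠ 0 := by linarith
  have key : HasDerivAt (fun y : ℝ => (1/(2-β)) * y ^ (2-β)) (x ^ (1-β)) x := by
    have := (Real.hasDerivAt_rpow_const (p := 2 - β) (Or.inl hx.ne')).const_mul (1/(2-β))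
    have e : (1/(2-β)) * ((2-β) * x^(2-β-1)) = x^(1-β) := by
      have : (2:ℝ) - β - 1 = 1 - β := by ring
      rw [this, ← mul_assoc, one_div_mul_cancel h2, one_mul]
    exact e ▸ this
  apply key.congr_of_eventuallyEq
  filter_upwards [eventually_gt_nhds hx] with y hy
  simp [Fresp, abs_of_pos hy, Real.sign_of_pos hy]

lemma near_bound {β v z : ℝ} (hβ : β < 2) (hv : 0 < v) (hz : 0 ≤ z) (hzv : z ≤ v/2) :
    |Fresp β (v+z) + Fresp β (v-z) - 2*Fresp β v|
      ≤ (|1-β| * ((2:ℝ)^β + 2^(-β)) * v^(-β)) * z^2 := by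
  set Mv : ℝ := |1-β| * ((2:ℝ)^β + 2^(-β)) * v^(-β) with hMv
  have hMv0 : 0 ≤ Mv := by positivity
  set s : Set ℝ := Icc (v/2) (2*v) with hs
  have hGd : ∀ u ∈ s, HasDerivWithinAt (fun u : ℝ => u ^ (1-β)) ((1-β) * u^(-β)) s u := by
    intro u hu
    have hu0 : 0 < u := lt_of_lt_of_le (by linarith) hu.1
    have := Real.hasDerivAt_rpow_const (p := 1 - β) (Or.inl hu0.ne')
    have he : (1:ℝ) - β - 1 = -β := by ring
    rw [he] at this
    exact this.hasDerivWithinAt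
  have hGb : ∀ u ∈ s, ‖(1-β) * u^(-β)‖ ≤ Mv := by
    intro u hu
    have hu0 : 0 < u := lt_of_lt_of_le (by linarith) hu.1
    have hub : u^(-β) ≤ ((2:ℝ)^β + 2^(-β)) * v^(-β) := by
      have e1 : (v/2)^(-β) = 2^β * v^(-β) := by
        rw [Real.div_rpow hv.le (by norm_num),
          Real.rpow_neg (by norm_num : (0:ℝ) ≤ 2) β]
        field_simp
      have e2 : (2*v)^(-β) = 2^(-β) * v^(-β) := by
        rw [Real.mul_rpow (by norm_num) hv.le]
      have h2b : (0:ℝ) ≤ 2^(-β) * v^(-β) := by positivity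
      have h1b : (0:ℝ) ≤ 2^β * v^(-β) := by positivity
      rcases le_or_gt β 0 with hb | hb
      · have : u^(-β) ≤ (2*v)^(-β) :=
          Real.rpow_le_rpow hu0.le hu.2 (by linarith)
        rw [e2] at this; nlinarith
      · have : u^(-β) ≤ (v/2)^(-β) :=
          Real.rpow_le_rpow_of_nonpos (by linarith) hu.1 (by linarith)
        rw [e1] at this; nlinarith
    rw [norm_mul, Real.norm_eq_abs, Real.norm_eq_abs,
      abs_of_nonneg (Real.rpow_nonneg hu0.le _)]
    calc |1-β| * u^(-β) ≤ |1-β| * (((2:ℝ)^β + 2^(-β)) * v^(-β)) :=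
          mul_le_mul_of_nonneg_left hub (abs_nonneg _)
      _ = Mv := by rw [hMv]; ring
  set h : ℝ → ℝ := fun t => Fresp β (v+t) + Fresp β (v-t) - 2*Fresp β v with hh
  have hh0 : h 0 = 0 := by simp [hh]; ring
  have hhd : ∀ t ∈ Icc 0 z, HasDerivAt h ((v+t)^(1-β) - (v-t)^(1-β)) t := by
    intro t ht
    have h1 : (0:ℝ) < v + t := by linarith [ht.1]
    have h2 : (0:ℝ) < v - t := by have := ht.2; linarith
    have d1 : HasDerivAt (fun t : ℝ => Fresp β (v+t)) ((v+t)^(1-β)) t := by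
      have inner : HasDerivAt (fun t : ℝ => v + t) 1 t := (hasDerivAt_id t).const_add v
      have := (hasDerivAt_Fresp hβ h1).comp t inner
      simp only [mul_one] at this
      exact this
    have d2 : HasDerivAt (fun t : ℝ => Fresp β (v-t)) (-((v-t)^(1-β))) t := by
      have inner : HasDerivAt (fun t : ℝ => v - t) (-1) t := by
        exact (hasDerivAt_id t).const_sub v
      have := (hasDerivAt_Fresp hβ h2).comp t inner
      simp only [mul_neg, mul_one] at this
      exact this
    simpa [hh, sub_eq_add_neg] using (d1.add d2).sub_const (2*Fresp β v)
  have hbd : ∀ t ∈ Ico 0 z, ‖(v+t)^(1-β) - (v-t)^(1-β)‖ ≤ 2*Mv*t := by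
    intro t ht
    have h1 : v + t ∈ s := by
      rw [hs, mem_Icc]; constructor <;> nlinarith [ht.1, ht.2.le]
    have h2 : v - t ∈ s := by
      rw [hs, mem_Icc]; constructor <;> nlinarith [ht.1, ht.2.le]
    have key := (convex_Icc (v/2) (2*v)).norm_image_sub_le_of_norm_hasDerivWithin_le
      hGd hGb h2 h1
    calc ‖(v+t)^(1-β) - (v-t)^(1-β)‖ ≤ Mv * ‖(v+t) - (v-t)‖ := key
      _ = 2*Mv*t := by
          rw [show v + t - (v - t) = 2*t by ring, Real.norm_eq_abs,
            abs_of_nonneg (by linarith [ht.1])]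
          ring
  have fence := image_norm_le_of_norm_deriv_right_le_deriv_boundary
    (f := h) (f' := fun t => (v+t)^(1-β) - (v-t)^(1-β)) (a := 0) (b := z)
    (B := fun t => Mv * t^2) (B' := fun t => 2*Mv*t)
    (fun t ht => ((hhd t ht).continuousAt).continuousWithinAt)
    (fun t ht => (hhd t (Ico_subset_Icc_self ht)).hasDerivWithinAt)
    (by simp [hh0])
    (fun t => by
      simpa [mul_comm, mul_assoc, mul_left_comm] using
        ((hasDerivAt_pow 2 t).const_mul Mv))
    hbd (right_mem_Icc.mpr hz)
  simpa [hh, Real.norm_eq_abs] using fence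

lemma far_bound {β v z A : ℝ} (hβ : β < 2) (hv : 0 < v) (hz : 0 < z) (hzA : z ≤ A)
    (hvz : v ≤ 2*z) (hA : 1 ≤ A) :
    |Fresp β (v+z) + Fresp β (v-z) - 2*Fresp β v| ≤ 4*(1/(2-β))*(3*A)^(2-β) := by
  have h2β : (0:ℝ) < 2 - β := by linarith
  have key : ∀ u : ℝ, |u| ≤ 3*A → |Fresp β u| ≤ (1/(2-β))*(3*A)^(2-β) := by
    intro u hu
    refine le_trans (Fresp_abs_le β u hβ) ?_
    apply mul_le_mul_of_nonneg_left _ (by positivity)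
    exact Real.rpow_le_rpow (abs_nonneg u) hu h2β.le
  have b1 : |v+z| ≤ 3*A := by rw [abs_le]; constructor <;> linarith
  have b2 : |v-z| ≤ 3*A := by rw [abs_le]; constructor <;> linarith
  have b3 : |v| ≤ 3*A := by rw [abs_le]; constructor <;> linarith
  calc |Fresp β (v+z) + Fresp β (v-z) - 2*Fresp β v|
      ≤ |Fresp β (v+z)| + |Fresp β (v-z)| + 2*|Fresp β v| := by
        have := abs_sub (Fresp β (v+z) + Fresp β (v-z)) (2*Fresp β v)
        calc |Fresp β (v+z) + Fresp β (v-z) - 2*Fresp β v|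
            ≤ |Fresp β (v+z) + Fresp β (v-z)| + |2*Fresp β v| := abs_sub _ _
          _ ≤ |Fresp β (v+z)| + |Fresp β (v-z)| + 2*|Fresp β v| := by
              have := abs_add_le (Fresp β (v+z)) (Fresp β (v-z))
              rw [abs_mul, abs_two] at *
              linarith
    _ ≤ (1/(2-β))*(3*A)^(2-β) + (1/(2-β))*(3*A)^(2-β) + 2*((1/(2-β))*(3*A)^(2-β)) := by
        have k1 := key _ b1; have k2 := key _ b2; have k3 := key _ b3
        have : 0 ≤ |Fresp β v| := abs_nonneg _
        nlinarith
    _ = 4*(1/(2-β))*(3*A)^(2-β) := by ring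

lemma S_bound (α A C₁ : ℝ) (hα : 0 < α) (hα2 : α < 2) (hA : 0 < A) (hC₁ : 0 < C₁)
    (μ : Measure ℝ)
    (hμt : ∀ r : ℝ, 0 < r → μ (Set.Ici r) ≤ ENNReal.ofReal (C₁ * r ^ (-α))) :
    ∫⁻ z, ENNReal.ofReal ((max (min z A) 0)^2) ∂μ
      ≤ ENNReal.ofReal (∫ t in Ioc (0:ℝ) A, 2*C₁*t^(1-α)) := by
  set f : ℝ → ℝ := fun z => max (min z A) 0 with hf
  have f_cont : Continuous f := (continuous_id.min continuous_const).max continuous_const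
  have key := lintegral_comp_eq_lintegral_meas_le_mul μ (f := f) (g := fun t => 2*t)
    (ae_of_all _ fun z => le_max_right _ _)
    f_cont.measurable.aemeasurable
    (fun t ht => (continuous_const.mul continuous_id).intervalIntegrable 0 t)
    ((ae_restrict_iff' measurableSet_Ioi).2 (ae_of_all _ fun t ht => by
      show (0:ℝ) ≤ 2*t
      have : (0:ℝ) < t := ht; linarith))
  have eInt : ∀ x : ℝ, (∫ t in (0:ℝ)..x, 2*t) = x^2 := by
    intro x
    rw [intervalIntegral.integral_const_mul]
    simp [integral_id]
    ring
  simp_rw [eInt] at key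
  rw [key]
  have hint : IntegrableOn (fun t : ℝ => 2*C₁*t^(1-α)) (Ioc 0 A) := by
    have h1 : IntervalIntegrable (fun t : ℝ => t^(1-α)) volume 0 A :=
      intervalIntegral.intervalIntegrable_rpow' (by linarith)
    have h2 := h1.const_mul (2*C₁)
    rw [intervalIntegrable_iff, uIoc_of_le hA.le] at h2
    simpa [mul_assoc] using h2
  have hnn : 0 ≤ᵐ[volume.restrict (Ioc (0:ℝ) A)] fun t : ℝ => 2*C₁*t^(1-α) :=
    (ae_restrict_iff' measurableSet_Ioc).2 (ae_of_all _ fun t ht => by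
      have : (0:ℝ) < t := ht.1
      positivity)
  rw [ofReal_integral_eq_lintegral_ofReal hint hnn]
  calc ∫⁻ t in Ioi 0, μ {a : ℝ | t ≤ f a} * ENNReal.ofReal (2*t)
      ≤ ∫⁻ t in Ioi 0,
          (Ioc (0:ℝ) A).indicator (fun t => ENNReal.ofReal (2*C₁*t^(1-α))) t := by
        refine lintegral_mono_ae ((ae_restrict_iff' measurableSet_Ioi).2
          (ae_of_all _ fun t ht => ?_))
        have ht0 : (0:ℝ) < t := ht
        by_cases htA : t ≤ A
        · have hsub : {a : ℝ | t ≤ f a} ⊆ Ici t := by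
            intro a ha
            simp only [hf, mem_setOf_eq] at ha
            rcases le_max_iff.1 ha with h | h
            · exact (le_min_iff.1 h).1
            · linarith
          have hμ : μ {a : ℝ | t ≤ f a} ≤ ENNReal.ofReal (C₁ * t^(-α)) :=
            le_trans (measure_mono hsub) (hμt t ht0)
          have heq : ENNReal.ofReal (C₁ * t^(-α)) * ENNReal.ofReal (2*t)
              = ENNReal.ofReal (2*C₁*t^(1-α)) := by
            rw [← ENNReal.ofReal_mul (by positivity)]
            congr 1
            have e : t^((1:ℝ)-α) = t^(-α) * t := by
              rw [show (1:ℝ)-α = -α + 1 by ring, Real.rpow_add ht0, Real.rpow_one]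
            rw [e]; ring
          rw [indicator_of_mem (mem_Ioc.2 ⟨ht0, htA⟩)]
          calc μ {a : ℝ | t ≤ f a} * ENNReal.ofReal (2*t)
              ≤ ENNReal.ofReal (C₁ * t^(-α)) * ENNReal.ofReal (2*t) :=
                mul_le_mul_left hμ _
            _ = _ := heq
        · have hempty : {a : ℝ | t ≤ f a} = ∅ := by
            ext a
            simp only [hf, mem_setOf_eq, mem_empty_iff_false, iff_false, not_le]
            calc max (min a A) 0 ≤ max A 0 :=
                  max_le_max (min_le_right a A) le_rfl
              _ = A := max_eq_left hA.le
              _ < t := lt_of_not_ge htA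
          rw [hempty]
          simp
    _ = ∫⁻ t in Ioc (0:ℝ) A, ENNReal.ofReal (2*C₁*t^(1-α)) := by
        rw [lintegral_indicator measurableSet_Ioc _,
          Measure.restrict_restrict measurableSet_Ioc,
          inter_eq_self_of_subset_left Ioc_subset_Ioi_self]

lemma main_pos (α β A C₁ δ : ℝ) (hα : α ∈ Set.Ioo (0:ℝ) 2) (hαβ : α + β < 2)
    (hA : 1 ≤ A) (hC₁ : 0 < C₁) (hδ : 0 < δ)
    (μ : Measure ℝ) (hμc : μ (Set.Ioc (0:ℝ) A)ᶜ = 0)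
    (hμt : ∀ r : ℝ, 0 < r → μ (Set.Ici r) ≤ ENNReal.ofReal (C₁ * r ^ (-α)))
    (v : ℝ) (hv : δ ≤ v) :
    Integrable (fun z => Fresp β (v + z) + Fresp β (v - z) - 2 * Fresp β v) μ ∧
    |∫ z, (Fresp β (v + z) + Fresp β (v - z) - 2 * Fresp β v) ∂μ|
      ≤ ((|1-β| * ((2:ℝ)^β + 2^(-β))) * (∫ t in Ioc (0:ℝ) A, 2*C₁*t^(1-α))
          + (4*(1/(2-β))*(3*A)^(2-β)) * (C₁ * 2^α * (δ^(β-α) + (2*A)^(β-α)))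
          + 1) * v ^ (-β) := by
  obtain ⟨hα0, hα2⟩ := hα
  have hβ2 : β < 2 := by linarith
  have h2β : (0:ℝ) < 2 - β := by linarith
  have hv0 : 0 < v := lt_of_lt_of_le hδ hv
  have hA0 : (0:ℝ) < A := by linarith
  set K₁ : ℝ := |1-β| * ((2:ℝ)^β + 2^(-β)) with hK₁
  set M : ℝ := 4*(1/(2-β))*(3*A)^(2-β) with hM
  set S₀ : ℝ := ∫ t in Ioc (0:ℝ) A, 2*C₁*t^(1-α) with hS₀
  set c₂ : ℝ := C₁ * 2^α * (δ^(β-α) + (2*A)^(β-α)) with hc₂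
  have hK₁0 : 0 ≤ K₁ := by rw [hK₁]; positivity
  have hM0 : 0 ≤ M := by rw [hM]; positivity
  have hc₂0 : 0 ≤ c₂ := by rw [hc₂]; positivity
  have hS₀0 : 0 ≤ S₀ := by
    rw [hS₀]
    apply setIntegral_nonneg measurableSet_Ioc
    intro t ht
    have : (0:ℝ) < t := ht.1
    positivity
  set g : ℝ → ℝ := fun z => Fresp β (v + z) + Fresp β (v - z) - 2 * Fresp β v with hg
  have hgm : Measurable g := by
    have hmF := measurable_Fresp β hβ2
    exact ((hmF.comp (measurable_const.add measurable_id)).add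
      (hmF.comp (measurable_const.sub measurable_id))).sub measurable_const
  have hae : ∀ᵐ z ∂μ, z ∈ Ioc (0:ℝ) A := by
    rw [ae_iff]
    simpa [compl_def] using hμc
  set φ₁ : ℝ → ENNReal := fun z => ENNReal.ofReal ((K₁*v^(-β)) * (max (min z A) 0)^2)
    with hφ₁
  set φ₂ : ℝ → ENNReal := fun z => (Ici (v/2)).indicator (fun _ => ENNReal.ofReal M) z
    with hφ₂
  have hKv0 : 0 ≤ K₁ * v^(-β) := by positivity
  have hpt : ∀ᵐ z ∂μ, ENNReal.ofReal ‖g z‖ ≤ φ₁ z + φ₂ z := by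
    filter_upwards [hae] with z hz
    rcases le_or_gt z (v/2) with hc | hc
    · have hnb := near_bound hβ2 hv0 hz.1.le hc
      have hmm : max (min z A) 0 = z := by rw [min_eq_left hz.2, max_eq_left hz.1.le]
      refine le_trans ?_ le_self_add
      apply ENNReal.ofReal_le_ofReal
      show ‖g z‖ ≤ (K₁*v^(-β)) * (max (min z A) 0)^2
      rw [hmm, Real.norm_eq_abs]
      calc |g z| ≤ (|1-β| * ((2:ℝ)^β + 2^(-β)) * v^(-β)) * z^2 := hnb
        _ = (K₁*v^(-β)) * z^2 := by rw [hK₁]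
    · have hfb := far_bound hβ2 hv0 hz.1 hz.2 (by linarith) hA
      refine le_trans ?_ le_add_self
      have hmem : z ∈ Ici (v/2) := by simp only [mem_Ici]; linarith
      rw [hφ₂]
      show ENNReal.ofReal ‖g z‖ ≤ (Ici (v/2)).indicator (fun _ => ENNReal.ofReal M) z
      rw [indicator_of_mem hmem]
      apply ENNReal.ofReal_le_ofReal
      rw [Real.norm_eq_abs]
      rw [hM]
      exact hfb
  have hφ₁m : Measurable φ₁ := by
    apply ENNReal.measurable_ofReal.comp
    have : Continuous fun z : ℝ => (K₁*v^(-β)) * (max (min z A) 0)^2 :=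
      continuous_const.mul (((continuous_id.min continuous_const).max continuous_const).pow 2)
    exact this.measurable
  have hφ₁b : ∫⁻ z, φ₁ z ∂μ ≤ ENNReal.ofReal ((K₁*v^(-β)) * S₀) := by
    have : ∀ z, φ₁ z = ENNReal.ofReal (K₁*v^(-β)) * ENNReal.ofReal ((max (min z A) 0)^2) := by
      intro z
      rw [hφ₁]
      exact ENNReal.ofReal_mul hKv0
    simp_rw [this]
    have hm2 : Measurable fun z : ℝ => ENNReal.ofReal ((max (min z A) 0)^2) :=
      Measurable.ennreal_ofReal
        ((((continuous_id.min continuous_const).max continuous_const).pow 2).measurable)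
    rw [lintegral_const_mul _ hm2]
    rw [ENNReal.ofReal_mul hKv0]
    exact mul_le_mul_right (S_bound α A C₁ hα0 hα2 hA0 hC₁ μ hμt) _
  have hφ₂b : ∫⁻ z, φ₂ z ∂μ ≤ ENNReal.ofReal (M * (c₂ * v^(-β))) := by
    rw [hφ₂]
    simp_rw [lintegral_indicator measurableSet_Ici _, setLIntegral_const]
    have hμb : μ (Ici (v/2)) ≤ ENNReal.ofReal (c₂ * v^(-β)) := by
      rcases le_or_gt v (2*A) with hva | hva
      · refine le_trans (hμt (v/2) (by positivity)) (ENNReal.ofReal_le_ofReal ?_)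
        have e1 : (v/2)^(-α) = 2^α * v^(-α) := by
          rw [Real.div_rpow hv0.le (by norm_num),
            Real.rpow_neg (by norm_num : (0:ℝ) ≤ 2) α]
          field_simp
        have e2 : v^(-α) = v^(β-α) * v^(-β) := by
          rw [← Real.rpow_add hv0]
          congr 1
          ring
        have e3 : v^(β-α) ≤ δ^(β-α) + (2*A)^(β-α) := by
          have hd : (0:ℝ) ≤ δ^(β-α) := Real.rpow_nonneg hδ.le _
          have h2a : (0:ℝ) ≤ (2*A)^(β-α) := Real.rpow_nonneg (by linarith) _
          rcases le_or_gt 0 (β-α) with hba | hba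
          · have : v^(β-α) ≤ (2*A)^(β-α) := Real.rpow_le_rpow hv0.le hva hba
            linarith
          · have : v^(β-α) ≤ δ^(β-α) :=
              Real.rpow_le_rpow_of_nonpos hδ hv hba.le
            linarith
        have hvb0 : (0:ℝ) ≤ v^(-β) := Real.rpow_nonneg hv0.le _
        calc C₁ * (v/2)^(-α) = C₁ * 2^α * (v^(β-α) * v^(-β)) := by
              rw [e1, e2]; ring
          _ ≤ C₁ * 2^α * ((δ^(β-α) + (2*A)^(β-α)) * v^(-β)) := by
              have h0 : (0:ℝ) ≤ C₁ * 2^α := by positivity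
              apply mul_le_mul_of_nonneg_left _ h0
              exact mul_le_mul_of_nonneg_right e3 hvb0
          _ = c₂ * v^(-β) := by rw [hc₂]; ring
      · have hsub : Ici (v/2) ⊆ (Ioc (0:ℝ) A)ᶜ := by
          intro a ha
          simp only [mem_compl_iff, mem_Ioc, not_and, not_le]
          intro _
          have : v/2 ≤ a := ha
          linarith
        calc μ (Ici (v/2)) ≤ μ (Ioc (0:ℝ) A)ᶜ := measure_mono hsub
          _ = 0 := hμc
          _ ≤ _ := zero_le
    calc ENNReal.ofReal M * μ (Ici (v/2)) ≤ ENNReal.ofReal M * ENNReal.ofReal (c₂ * v^(-β)) :=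
          mul_le_mul_right hμb _
      _ = ENNReal.ofReal (M * (c₂ * v^(-β))) := (ENNReal.ofReal_mul hM0).symm
  set CC : ℝ := K₁ * S₀ + M * c₂ + 1 with hCC
  have hL : ∫⁻ z, ENNReal.ofReal ‖g z‖ ∂μ ≤ ENNReal.ofReal (CC * v^(-β)) := by
    calc ∫⁻ z, ENNReal.ofReal ‖g z‖ ∂μ ≤ ∫⁻ z, (φ₁ z + φ₂ z) ∂μ := lintegral_mono_ae hpt
      _ = ∫⁻ z, φ₁ z ∂μ + ∫⁻ z, φ₂ z ∂μ := lintegral_add_left hφ₁m _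
      _ ≤ ENNReal.ofReal ((K₁*v^(-β)) * S₀) + ENNReal.ofReal (M * (c₂ * v^(-β))) :=
          add_le_add hφ₁b hφ₂b
      _ = ENNReal.ofReal ((K₁*v^(-β)) * S₀ + M * (c₂ * v^(-β))) := by
          rw [ENNReal.ofReal_add (by positivity) (by positivity)]
      _ ≤ ENNReal.ofReal (CC * v^(-β)) := by
          apply ENNReal.ofReal_le_ofReal
          have hvb0 : (0:ℝ) ≤ v^(-β) := Real.rpow_nonneg hv0.le _
          rw [hCC]
          nlinarith
  have hint : Integrable g μ := by
    constructor
    · exact hgm.aestronglyMeasurable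
    · rw [hasFiniteIntegral_iff_norm]
      exact lt_of_le_of_lt hL ENNReal.ofReal_lt_top
  refine ⟨hint, ?_⟩
  have hCCv0 : (0:ℝ) ≤ CC * v^(-β) := by
    have hvb0 : (0:ℝ) ≤ v^(-β) := Real.rpow_nonneg hv0.le _
    have : (0:ℝ) ≤ CC := by rw [hCC]; nlinarith
    positivity
  calc |∫ z, g z ∂μ| = ‖∫ z, g z ∂μ‖ := (Real.norm_eq_abs _).symm
    _ ≤ (∫⁻ z, ENNReal.ofReal ‖g z‖ ∂μ).toReal := norm_integral_le_lintegral_norm g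
    _ ≤ CC * v^(-β) := ENNReal.toReal_le_of_le_ofReal hCCv0 hL

/-- Uniform decay estimate for `H(v) = ∫₀^∞ (F(v+z)+F(v-z)-2F(v)) dμ(z)`:
for `|v| ≥ δ` one has `|H(v)| ≤ C|v|^(-β)`, uniformly over truncated
Lévy-type measures `μ` on `(0,A]` with tail bound `μ([r,∞)) ≤ C₁ r^(-α)`. -/
theorem H_decay_bound
    (α β A C₁ δ : ℝ) (hα : α ∈ Set.Ioo (0:ℝ) 2) (hαβ : α + β < 2)
    (hA : 1 ≤ A) (hC₁ : 0 < C₁) (hδ : 0 < δ) :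
    ∃ C : ℝ, 0 < C ∧
      ∀ μ : Measure ℝ, μ (Set.Ioc (0:ℝ) A)ᶜ = 0 →
        (∀ r : ℝ, 0 < r → μ (Set.Ici r) ≤ ENNReal.ofReal (C₁ * r ^ (-α))) →
        ∀ v : ℝ, δ ≤ |v| →
          Integrable (fun z => Fresp β (v + z) + Fresp β (v - z) - 2 * Fresp β v) μ ∧
          |∫ z, (Fresp β (v + z) + Fresp β (v - z) - 2 * Fresp β v) ∂μ|
            ≤ C * |v| ^ (-β) := by
  have hβ2 : β < 2 := by have := hα.1; linarith
  have h2β : (0:ℝ) < 2 - β := by linarith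
  have hA0 : (0:ℝ) < A := by linarith
  refine ⟨(|1-β| * ((2:ℝ)^β + 2^(-β))) * (∫ t in Ioc (0:ℝ) A, 2*C₁*t^(1-α))
      + (4*(1/(2-β))*(3*A)^(2-β)) * (C₁ * 2^α * (δ^(β-α) + (2*A)^(β-α)))
      + 1, ?_, ?_⟩
  · have h1 : (0:ℝ) ≤ (|1-β| * ((2:ℝ)^β + 2^(-β))) * (∫ t in Ioc (0:ℝ) A, 2*C₁*t^(1-α)) := by
      have hS : (0:ℝ) ≤ ∫ t in Ioc (0:ℝ) A, 2*C₁*t^(1-α) := by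
        apply setIntegral_nonneg measurableSet_Ioc
        intro t ht
        have : (0:ℝ) < t := ht.1
        positivity
      positivity
    have h2 : (0:ℝ) ≤ (4*(1/(2-β))*(3*A)^(2-β)) * (C₁ * 2^α * (δ^(β-α) + (2*A)^(β-α))) := by
      positivity
    linarith
  · intro μ hμc hμt v hv
    rcases le_or_gt 0 v with hv0 | hv0
    · have hva : |v| = v := abs_of_nonneg hv0
      rw [hva] at hv ⊢
      exact main_pos α β A C₁ δ hα hαβ hA hC₁ hδ μ hμc hμt v hv
    · have hva : |v| = -v := abs_of_neg hv0
      rw [hva] at hv ⊢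
      obtain ⟨hint, hbnd⟩ := main_pos α β A C₁ δ hα hαβ hA hC₁ hδ μ hμc hμt (-v) hv
      have hfun : (fun z => Fresp β (v + z) + Fresp β (v - z) - 2 * Fresp β v)
          = fun z => -(Fresp β (-v + z) + Fresp β (-v - z) - 2 * Fresp β (-v)) := by
        funext z
        have e1 : Fresp β (v + z) = -Fresp β (-v - z) := by
          rw [← Fresp_neg]
          congr 1
          ring
        have e2 : Fresp β (v - z) = -Fresp β (-v + z) := by
          rw [← Fresp_neg]
          congr 1
          ring
        have e3 : Fresp β v = -Fresp β (-v) := by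
          rw [← Fresp_neg]
          congr 1
          ring
        rw [e1, e2, e3]
        ring
      constructor
      · rw [hfun]
        exact hint.neg
      · rw [hfun, integral_neg, abs_neg]
        exact hbnd
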